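/- Let C1, C2 : [0,1]² → ℝ be continuously differentiable functions such that at every point (k1,k2) ∈ [0,1)×[0,1): ∂C1/∂k1 > 0, ∂C2/∂k2 > 0, ∂C1/∂k2 < 0, ∂C2/∂k1 < 0, and (∂C1/∂k2)(∂C2/∂k1) > (∂C1/∂k1)(∂C2/∂k2). Then for every interior-boundary point (k1,k2) with k1 < 1 and k2 < 1 there exists a direction vector (1,θ) with θ > 0 such that the directional derivatives of both C1 and C2 at (k1,k2) along (1,θ) are strictly negative. Consequently, no point (k1,k2) with k1 < 1 and k2 < 1 is Pareto-optimal for minimizing (C1,C2). -/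

import Mathlib

/-!
Since `∂C1/∂k2 < 0 < ∂C2/∂k2`, the directional derivatives along `(1, θ)` are
`∂C1/∂k1 + θ ∂C1/∂k2` and `∂C2/∂k1 + θ ∂C2/∂k2`, and both are negative exactly for
`∂C1/∂k1 / (-∂C1/∂k2) < θ < -∂C2/∂k1 / ∂C2/∂k2`; cross-derivative dominance says this interval
is nonempty, and `∂C2/∂k1 < 0` puts positive values in it. A direction with nonnegative
coordinates stays in `[0,1]²` for short times from a point with `k1, k2 < 1`, and a small
step along it strictly decreases both costs, so such a point is not Pareto-optimal.
-/

/-- Pareto optimality for minimizing (C1, C2) over [0,1]². -/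
def ParetoOpt (C1 C2 : ℝ × ℝ → ℝ) (p : ℝ × ℝ) : Prop :=
  p ∈ Set.Icc (0 : ℝ) 1 ×ˢ Set.Icc (0 : ℝ) 1 ∧
  ¬ ∃ q ∈ Set.Icc (0 : ℝ) 1 ×ˢ Set.Icc (0 : ℝ) 1,
      C1 q ≤ C1 p ∧ C2 q ≤ C2 p ∧ (C1 q < C1 p ∨ C2 q < C2 p)

open Filter Topology Set

theorem HasLineDerivAt.eventually_lt_of_neg {E : Type*} [NormedAddCommGroup E] [NormedSpace ℝ E]
    {f : E → ℝ} {f' : ℝ} {x v : E} (hf : HasLineDerivAt ℝ f f' x v) (hf' : f' < 0) :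
    ∀ᶠ t in 𝓝[>] (0 : ℝ), f (x + t • v) < f x := by
  have hslope : ∀ᶠ t in 𝓝[>] (0 : ℝ), t⁻¹ • (f (x + t • v) - f x) < 0 :=
    (hf.tendsto_slope_zero.mono_left (nhdsGT_le_nhdsNE 0)).eventually (eventually_lt_nhds hf')
  filter_upwards [hslope, self_mem_nhdsWithin] with t hneg (ht : 0 < t)
  exact sub_neg.1 (neg_of_mul_neg_right hneg (inv_nonneg.2 ht.le))

theorem ContinuousLinearMap.apply_prod_eq (L : ℝ × ℝ →L[ℝ] ℝ) (x y : ℝ) :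
    L (x, y) = x * L (1, 0) + y * L (0, 1) := by
  have : ((x, y) : ℝ × ℝ) = x • (1, 0) + y • (0, 1) := by simp
  rw [this, map_add, map_smul, map_smul, smul_eq_mul, smul_eq_mul]

theorem exists_pos_add_mul_neg_and_add_mul_neg {a₁ b₁ a₂ b₂ : ℝ} (hb₁ : b₁ < 0) (hb₂ : 0 < b₂)
    (ha₂ : a₂ < 0) (h : a₁ * b₂ < b₁ * a₂) :
    ∃ θ : ℝ, 0 < θ ∧ a₁ + θ * b₁ < 0 ∧ a₂ + θ * b₂ < 0 := by
  have hb₁' : 0 < -b₁ := neg_pos.2 hb₁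
  have hlt : max 0 (a₁ / -b₁) < -a₂ / b₂ :=
    max_lt (div_pos (neg_pos.2 ha₂) hb₂) ((div_lt_div_iff₀ hb₁' hb₂).2 (by linarith))
  obtain ⟨θ, hθlo, hθhi⟩ := exists_between hlt
  rw [max_lt_iff, div_lt_iff₀ hb₁'] at hθlo
  rw [lt_div_iff₀ hb₂] at hθhi
  exact ⟨θ, hθlo.1, by linarith [hθlo.2], by linarith⟩

theorem eventually_add_smul_mem_unitSquare {p v : ℝ × ℝ}
    (hp : p ∈ Ico (0 : ℝ) 1 ×ˢ Ico (0 : ℝ) 1) (hv : 0 ≤ v) :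
    ∀ᶠ t in 𝓝[>] (0 : ℝ), p + t • v ∈ Icc (0 : ℝ) 1 ×ˢ Icc (0 : ℝ) 1 := by
  have hopen : Iio (1 : ℝ) ×ˢ Iio (1 : ℝ) ∈ 𝓝 (p + (0 : ℝ) • v) := by
    rw [zero_smul, add_zero]
    exact prod_mem_nhds (Iio_mem_nhds hp.1.2) (Iio_mem_nhds hp.2.2)
  have hcont : Tendsto (fun t : ℝ => p + t • v) (𝓝[>] 0) (𝓝 (p + (0 : ℝ) • v)) :=
    (Continuous.tendsto (by fun_prop) 0).mono_left nhdsWithin_le_nhds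
  filter_upwards [hcont hopen, self_mem_nhdsWithin] with t ⟨h₁, h₂⟩ (ht : 0 < t)
  have hpos := smul_nonneg ht.le hv
  exact ⟨⟨add_nonneg hp.1.1 hpos.1, le_of_lt h₁⟩, ⟨add_nonneg hp.2.1 hpos.2, le_of_lt h₂⟩⟩

theorem not_paretoOpt_of_fderiv_neg {C1 C2 : ℝ × ℝ → ℝ} {p v : ℝ × ℝ}
    (hp : p ∈ Ico (0 : ℝ) 1 ×ˢ Ico (0 : ℝ) 1) (hv : 0 ≤ v)
    (hC1 : DifferentiableAt ℝ C1 p) (hC2 : DifferentiableAt ℝ C2 p)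
    (h1 : fderiv ℝ C1 p v < 0) (h2 : fderiv ℝ C2 p v < 0) :
    ¬ ParetoOpt C1 C2 p := by
  rintro ⟨-, hopt⟩
  obtain ⟨t, ⟨hmem, hlt1⟩, hlt2⟩ := (((eventually_add_smul_mem_unitSquare hp hv).and
    ((hC1.hasFDerivAt.hasLineDerivAt v).eventually_lt_of_neg h1)).and
    ((hC2.hasFDerivAt.hasLineDerivAt v).eventually_lt_of_neg h2)).exists
  exact hopt ⟨p + t • v, hmem, hlt1.le, hlt2.le, Or.inl hlt1⟩

theorem stmt_10 (C1 C2 : ℝ × ℝ → ℝ)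
    (hC1 : ContDiff ℝ 1 C1) (hC2 : ContDiff ℝ 1 C2)
    (hyp : ∀ p : ℝ × ℝ, p ∈ Set.Ico (0 : ℝ) 1 ×ˢ Set.Ico (0 : ℝ) 1 →
      0 < fderiv ℝ C1 p (1, 0) ∧ 0 < fderiv ℝ C2 p (0, 1) ∧
      fderiv ℝ C1 p (0, 1) < 0 ∧ fderiv ℝ C2 p (1, 0) < 0 ∧
      fderiv ℝ C1 p (1, 0) * fderiv ℝ C2 p (0, 1) <
        fderiv ℝ C1 p (0, 1) * fderiv ℝ C2 p (1, 0)) :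
    ∀ p : ℝ × ℝ, p ∈ Set.Ico (0 : ℝ) 1 ×ˢ Set.Ico (0 : ℝ) 1 →
      (∃ θ : ℝ, 0 < θ ∧ fderiv ℝ C1 p (1, θ) < 0 ∧ fderiv ℝ C2 p (1, θ) < 0) ∧
      ¬ ParetoOpt C1 C2 p := by
  intro p hp
  obtain ⟨-, hB₂, hB₁, hA₂, hcross⟩ := hyp p hp
  obtain ⟨θ, hθ, h1, h2⟩ := exists_pos_add_mul_neg_and_add_mul_neg hB₁ hB₂ hA₂ hcross
  have hdir (L : ℝ × ℝ →L[ℝ] ℝ) : L (1, θ) = L (1, 0) + θ * L (0, 1) := by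
    rw [L.apply_prod_eq, one_mul]
  rw [← hdir] at h1 h2
  have hv : (0 : ℝ × ℝ) ≤ (1, θ) := ⟨zero_le_one, hθ.le⟩
  exact ⟨⟨θ, hθ, h1, h2⟩, not_paretoOpt_of_fderiv_neg hp hv
    ((hC1.differentiable one_ne_zero) p) ((hC2.differentiable one_ne_zero) p) h1 h2⟩
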